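/- A triangle-free graph G has an error-correcting identifying code if and only if G is twin-free, δ(G) ≥ 2, and G has no two adjacent degree-2 vertices. -/

import Mathlib

/-! A larger code distinguishes and dominates at least as well, so `G` has an error-correcting
identifying code iff the whole vertex set is one, i.e. iff every closed neighbourhood has at
least three vertices and any two closed neighbourhoods differ in at least three vertices. For
non-adjacent `u ≠ v` the difference `N[u] ∆ N[v]` consists of `u`, `v` and `N(u) ∆ N(v)`, so it
is large enough iff `u, v` are not open twins. For adjacent `u, v` in a triangle-free graph it
is the disjoint union of `N(u) \ {v}` and `N(v) \ {u}`, of size `deg u + deg v - 2`. -/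


open SimpleGraph

variable {V : Type*}

/-- Closed neighborhood of `v` in `G`. -/
def closedNbhd (G : SimpleGraph V) (v : V) : Set V := insert v (G.neighborSet v)

/-- `S` is an error-correcting identifying code for `G`: every vertex is 3-dominated
and every pair of distinct vertices is 3-distinguished. -/
def IsErrIC (G : SimpleGraph V) (S : Set V) : Prop :=
  (∀ v : V, 3 ≤ (closedNbhd G v ∩ S).ncard) ∧
  ∀ u v : V, u ≠ v → 3 ≤ (symmDiff (closedNbhd G u ∩ S) (closedNbhd G v ∩ S)).ncard

/-- `G` has no closed twins and no open twins. -/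
def TwinFree (G : SimpleGraph V) : Prop :=
  ∀ u v : V, u ≠ v →
    closedNbhd G u ≠ closedNbhd G v ∧ G.neighborSet u ≠ G.neighborSet v

open Set
open scoped symmDiff

variable {G : SimpleGraph V} {u v w : V}

lemma mem_closedNbhd : w ∈ closedNbhd G v ↔ w = v ∨ G.Adj v w := Iff.rfl

lemma ncard_closedNbhd [Finite V] (G : SimpleGraph V) (v : V) :
    (closedNbhd G v).ncard = (G.neighborSet v).ncard + 1 :=
  ncard_insert_of_notMem G.notMem_neighborSet_self

lemma IsErrIC.mono [Finite V] {S T : Set V} (hS : IsErrIC G S) (hST : S ⊆ T) :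
    IsErrIC G T := by
  refine ⟨fun v ↦ (hS.1 v).trans (ncard_le_ncard (inter_subset_inter_right _ hST)),
    fun u v huv ↦ (hS.2 u v huv).trans ?_⟩
  rw [← inter_symmDiff_distrib_right, ← inter_symmDiff_distrib_right]
  exact ncard_le_ncard (inter_subset_inter_right _ hST)

lemma isErrIC_univ_iff :
    IsErrIC G univ ↔ (∀ v, 3 ≤ (closedNbhd G v).ncard) ∧
      ∀ u v, u ≠ v → 3 ≤ (closedNbhd G u ∆ closedNbhd G v).ncard := by
  simp only [IsErrIC, inter_univ]

lemma exists_isErrIC_iff_univ [Finite V] : (∃ S, IsErrIC G S) ↔ IsErrIC G univ :=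
  ⟨fun ⟨_, hS⟩ ↦ hS.mono (subset_univ _), fun h ↦ ⟨univ, h⟩⟩

lemma symmDiff_closedNbhd_of_not_adj (huv : u ≠ v) (hadj : ¬G.Adj u v) :
    closedNbhd G u ∆ closedNbhd G v = {u, v} ∪ G.neighborSet u ∆ G.neighborSet v := by
  have hvu : ¬G.Adj v u := fun h ↦ hadj h.symm
  ext w
  simp only [mem_symmDiff, mem_closedNbhd, mem_union, mem_insert_iff, mem_singleton_iff,
    mem_neighborSet]
  grind [G.loopless.irrefl]

lemma ncard_symmDiff_closedNbhd_of_not_adj [Finite V] (huv : u ≠ v) (hadj : ¬G.Adj u v) :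
    (closedNbhd G u ∆ closedNbhd G v).ncard = (G.neighborSet u ∆ G.neighborSet v).ncard + 2 := by
  have hvu : ¬G.Adj v u := fun h ↦ hadj h.symm
  rw [symmDiff_closedNbhd_of_not_adj huv hadj, ncard_union_eq, ncard_pair huv, add_comm]
  simp [Set.disjoint_left, mem_symmDiff, hadj, hvu]

lemma three_le_ncard_symmDiff_closedNbhd_iff_of_not_adj [Finite V] (huv : u ≠ v)
    (hadj : ¬G.Adj u v) :
    3 ≤ (closedNbhd G u ∆ closedNbhd G v).ncard ↔ G.neighborSet u ≠ G.neighborSet v := by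
  rw [ncard_symmDiff_closedNbhd_of_not_adj huv hadj, ← symmDiff_nonempty, ← ncard_pos]
  omega

lemma SimpleGraph.CliqueFree.not_adj_of_adj_of_adj (hT : G.CliqueFree 3) (huv : G.Adj u v)
    (huw : G.Adj u w) : ¬G.Adj v w := by
  rcases eq_or_ne v w with rfl | hvw
  · exact G.loopless.irrefl v
  · exact isIndepSet_neighborSet_of_triangleFree G hT u huv huw hvw

lemma symmDiff_closedNbhd_of_adj (hT : G.CliqueFree 3) (hadj : G.Adj u v) :
    closedNbhd G u ∆ closedNbhd G v = (G.neighborSet u \ {v}) ∪ (G.neighborSet v \ {u}) := by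
  have hu : ∀ w, G.Adj u w → ¬G.Adj v w := fun _ ↦ hT.not_adj_of_adj_of_adj hadj
  have hv : ∀ w, G.Adj v w → ¬G.Adj u w := fun _ ↦ hT.not_adj_of_adj_of_adj hadj.symm
  ext w
  simp only [mem_symmDiff, mem_closedNbhd, mem_union, mem_sdiff, mem_singleton_iff,
    mem_neighborSet]
  grind [G.loopless.irrefl, G.adj_symm]

lemma ncard_symmDiff_closedNbhd_of_adj [Finite V] (hT : G.CliqueFree 3) (hadj : G.Adj u v) :
    (closedNbhd G u ∆ closedNbhd G v).ncard + 2 =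
      (G.neighborSet u).ncard + (G.neighborSet v).ncard := by
  have hdisj : Disjoint (G.neighborSet u \ {v}) (G.neighborSet v \ {u}) :=
    Set.disjoint_left.2 fun w hu hv ↦ hT.not_adj_of_adj_of_adj hadj hu.1 hv.1
  have hu : 1 ≤ (G.neighborSet u).ncard := (ncard_pos).2 ⟨v, hadj⟩
  have hv : 1 ≤ (G.neighborSet v).ncard := (ncard_pos).2 ⟨u, hadj.symm⟩
  rw [symmDiff_closedNbhd_of_adj hT hadj, ncard_union_eq hdisj,
    ncard_sdiff_singleton_of_mem (s := G.neighborSet u) hadj,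
    ncard_sdiff_singleton_of_mem (s := G.neighborSet v) hadj.symm]
  omega

lemma not_adj_of_neighborSet_eq (h : G.neighborSet u = G.neighborSet v) : ¬G.Adj u v :=
  fun huv ↦ G.loopless.irrefl v (h ▸ huv : v ∈ G.neighborSet v)

theorem stmt5 [Fintype V] (G : SimpleGraph V) (hT : G.CliqueFree 3) :
    (∃ S : Set V, IsErrIC G S) ↔
      (TwinFree G ∧
       (∀ v : V, 2 ≤ (G.neighborSet v).ncard) ∧
       (∀ u v : V, G.Adj u v →
         ¬((G.neighborSet u).ncard = 2 ∧ (G.neighborSet v).ncard = 2))) := by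
  simp only [exists_isErrIC_iff_univ, isErrIC_univ_iff, ncard_closedNbhd, TwinFree]
  constructor
  · rintro ⟨hdeg, hsep⟩
    refine ⟨fun u v huv ↦ ⟨fun h ↦ ?_, fun h ↦ ?_⟩,
      fun v ↦ by linarith [hdeg v], fun u v hadj ↦ ?_⟩
    · simpa [h] using hsep u v huv
    · exact (three_le_ncard_symmDiff_closedNbhd_iff_of_not_adj huv
        (not_adj_of_neighborSet_eq h)).1 (hsep u v huv) h
    · have hsize := ncard_symmDiff_closedNbhd_of_adj hT hadj
      have := hsep u v hadj.ne
      omega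
  · rintro ⟨htwin, hdeg, hadj2⟩
    refine ⟨fun v ↦ by linarith [hdeg v], fun u v huv ↦ ?_⟩
    by_cases hadj : G.Adj u v
    · have hsize := ncard_symmDiff_closedNbhd_of_adj hT hadj
      have := hadj2 u v hadj
      have := hdeg u
      have := hdeg v
      omega
    · exact (three_le_ncard_symmDiff_closedNbhd_iff_of_not_adj huv hadj).2 (htwin u v huv).2
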